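/- arXiv:2311.14520 — 2 statements merged into one kernel-verified Lean document; each statement's English description precedes it below -/
import Mathlib

section
/- Rényi composition rule for q ∈ (0,1): Let S and T be standard Borel spaces and let μ^{X,Y}, ν^{X,Y} be probability measures on S×T with first marginals μ^X, ν^X and disintegrations x ↦ μ^{Y|X=x}, x ↦ ν^{Y|X=x}. Then for every q ∈ (0,1), R_q(μ^{X,Y} ∥ ν^{X,Y}) ≤ R_q(μ^X ∥ ν^X) + (μ^X ∧ ν^X)-esssup_{x} R_q(μ^{Y|X=x} ∥ ν^{Y|X=x}), where μ^X ∧ ν^X denotes the infimum (minimum) of the two measures μ^X and ν^X. -/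
open MeasureTheory ProbabilityTheory ENNReal Matrix

noncomputable section

namespace SCR

open scoped Classical

variable {Ω S T : Type*} [MeasurableSpace Ω] [MeasurableSpace S] [MeasurableSpace T]

/-- The Kullback--Leibler divergence `KL(μ ∥ ν)`, valued in `[0, ∞]`.  For probability
measures it agrees with `∫ log (dμ/dν) dμ` when `μ ≪ ν` (written here using the
nonnegative integrand `t ↦ t log t - t + 1` applied to the density), and is `∞` otherwise. -/
def klDiv (μ ν : Measure Ω) : ℝ≥0∞ :=
  if μ ≪ ν then
    ∫⁻ x, ENNReal.ofReal
      ((μ.rnDeriv ν x).toReal * Real.log (μ.rnDeriv ν x).toReal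
        - (μ.rnDeriv ν x).toReal + 1) ∂ν
  else ⊤

/-- Conversion `EReal → ℝ≥0∞`, sending `⊤` to `⊤` and negative values (and `⊥`) to `0`. -/
def erealToENNReal (x : EReal) : ℝ≥0∞ :=
  if x = ⊤ then ⊤ else ENNReal.ofReal x.toReal

/-- The Rényi divergence `R_q(μ ∥ ν)` of order `q`, valued in `[0, ∞]`.  For `q ≠ 1` it is
`(q-1)⁻¹ log ∫ (dμ/dλ)^q (dν/dλ)^(1-q) dλ` with common dominating measure `λ = μ + ν`;
for `q = 1` it is the Kullback--Leibler divergence. -/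
def renyiDiv (q : ℝ) (μ ν : Measure Ω) : ℝ≥0∞ :=
  if q = 1 then klDiv μ ν
  else erealToENNReal ((((q - 1)⁻¹ : ℝ) : EReal) *
    ENNReal.log (∫⁻ x, (μ.rnDeriv (μ + ν) x) ^ q * (ν.rnDeriv (μ + ν) x) ^ (1 - q) ∂(μ + ν)))

/-- `γ` is a coupling of `μ` and `ν`. -/
def IsCoupling (γ : Measure (S × T)) (μ : Measure S) (ν : Measure T) : Prop :=
  γ.fst = μ ∧ γ.snd = ν

/-! ### Auxiliary definitions and lemmas -/

/-- The Hellinger-type integral appearing in the Rényi divergence. -/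
def hell (q : ℝ) (μ ν : Measure Ω) : ℝ≥0∞ :=
  ∫⁻ x, (μ.rnDeriv (μ + ν) x) ^ q * (ν.rnDeriv (μ + ν) x) ^ (1 - q) ∂(μ + ν)

variable {q : ℝ}

lemma erealToENNReal_coe (x : ℝ) : erealToENNReal (x : EReal) = ENNReal.ofReal x := by
  simp [erealToENNReal]

lemma ac_add_left (μ ν : Measure Ω) : μ ≪ μ + ν :=
  Measure.absolutelyContinuous_of_le (Measure.le_add_right le_rfl)

lemma ac_add_right (μ ν : Measure Ω) : ν ≪ μ + ν :=
  Measure.absolutelyContinuous_of_le (fun s => le_add_left (le_rfl : ν s ≤ ν s))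

lemma ac_add_of (μ ν lam : Measure Ω) (hμ : μ ≪ lam) (hν : ν ≪ lam) : μ + ν ≪ lam := by
  refine Measure.AbsolutelyContinuous.mk fun s hs h0 => ?_
  rw [Measure.add_apply, hμ h0, hν h0, add_zero]

/-- Change of dominating measure in the Hellinger integral. -/
lemma hell_eq {μ ν lam : Measure Ω} [IsFiniteMeasure μ] [IsFiniteMeasure ν] [SigmaFinite lam]
    (hμ : μ ≪ lam) (hν : ν ≪ lam) (hq0 : 0 < q) (hq1 : q < 1) :
    ∫⁻ x, (μ.rnDeriv lam x) ^ q * (ν.rnDeriv lam x) ^ (1 - q) ∂lam = hell q μ ν := by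
  have hζ : μ + ν ≪ lam := ac_add_of μ ν lam hμ hν
  have h1 := Measure.rnDeriv_mul_rnDeriv (ν := μ + ν) (κ := lam) (ac_add_left μ ν)
  have h2 := Measure.rnDeriv_mul_rnDeriv (ν := μ + ν) (κ := lam) (ac_add_right μ ν)
  have htop := Measure.rnDeriv_ne_top (μ + ν) lam
  have hG : Measurable fun x =>
      (μ.rnDeriv (μ + ν) x) ^ q * (ν.rnDeriv (μ + ν) x) ^ (1 - q) :=
    ((Measure.measurable_rnDeriv _ _).pow_const _).mul
      ((Measure.measurable_rnDeriv _ _).pow_const _)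
  rw [hell, ← MeasureTheory.lintegral_rnDeriv_mul hζ hG.aemeasurable]
  refine lintegral_congr_ae ?_
  filter_upwards [h1, h2, htop] with x e1 e2 ht
  simp only [Pi.mul_apply] at e1 e2
  rw [← e1, ← e2]
  set a := μ.rnDeriv (μ + ν) x
  set b := ν.rnDeriv (μ + ν) x
  set c := (μ + ν).rnDeriv lam x
  rcases eq_or_ne c 0 with hc0 | hc0
  · rw [hc0]
    simp [ENNReal.zero_rpow_of_pos hq0, ENNReal.zero_rpow_of_pos (by linarith : (0:ℝ) < 1 - q)]
  · rw [ENNReal.mul_rpow_of_nonneg _ _ hq0.le,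
      ENNReal.mul_rpow_of_nonneg _ _ (by linarith : (0:ℝ) ≤ 1 - q)]
    have hcc : c ^ q * c ^ (1 - q) = c := by
      rw [← ENNReal.rpow_add _ _ hc0 ht]
      norm_num
    calc a ^ q * c ^ q * (b ^ (1 - q) * c ^ (1 - q))
        = c ^ q * c ^ (1 - q) * (a ^ q * b ^ (1 - q)) := by ring
      _ = c * (a ^ q * b ^ (1 - q)) := by rw [hcc]

/-- The Hellinger integral of probability measures is at most `1` when `q ∈ (0,1)`. -/
lemma hell_le_one (μ ν : Measure Ω) [IsProbabilityMeasure μ] [IsProbabilityMeasure ν]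
    (hq0 : 0 < q) (hq1 : q < 1) : hell q μ ν ≤ 1 := by
  have hq1' : (0:ℝ) < 1 - q := by linarith
  have hpq : (1 / q).HolderConjugate (1 / (1 - q)) := by
    constructor
    · rw [one_div, one_div, inv_inv, inv_inv, inv_one]; ring
    · exact div_pos one_pos hq0
    · exact div_pos one_pos hq1'
  have hf : AEMeasurable (fun x => (μ.rnDeriv (μ + ν) x) ^ q) (μ + ν) :=
    ((Measure.measurable_rnDeriv _ _).pow_const _).aemeasurable
  have hg : AEMeasurable (fun x => (ν.rnDeriv (μ + ν) x) ^ (1 - q)) (μ + ν) :=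
    ((Measure.measurable_rnDeriv _ _).pow_const _).aemeasurable
  have H := ENNReal.lintegral_mul_le_Lp_mul_Lq (μ + ν) hpq hf hg
  simp only [Pi.mul_apply] at H
  refine le_trans H ?_
  have e1 : ∀ x, ((μ.rnDeriv (μ + ν) x) ^ q) ^ (1 / q) = μ.rnDeriv (μ + ν) x := by
    intro x
    rw [← ENNReal.rpow_mul, mul_one_div_cancel hq0.ne', ENNReal.rpow_one]
  have e2 : ∀ x, ((ν.rnDeriv (μ + ν) x) ^ (1 - q)) ^ (1 / (1 - q)) = ν.rnDeriv (μ + ν) x := by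
    intro x
    rw [← ENNReal.rpow_mul, mul_one_div_cancel hq1'.ne', ENNReal.rpow_one]
  simp only [e1, e2]
  rw [Measure.lintegral_rnDeriv (ac_add_left μ ν), Measure.lintegral_rnDeriv (ac_add_right μ ν)]
  simp

lemma renyiDiv_def' (hq1 : q ≠ 1) (μ ν : Measure Ω) :
    renyiDiv q μ ν = erealToENNReal ((((q - 1)⁻¹ : ℝ) : EReal) * ENNReal.log (hell q μ ν)) := by
  rw [renyiDiv, if_neg hq1]; rfl

lemma inv_q_sub_one_neg (hq1 : q < 1) : (q - 1)⁻¹ < 0 :=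
  inv_lt_zero.mpr (by linarith)

lemma renyiDiv_eq_top_of_hell_eq_zero (hq1 : q < 1) {μ ν : Measure Ω} (h0 : hell q μ ν = 0) :
    renyiDiv q μ ν = ⊤ := by
  rw [renyiDiv_def' hq1.ne, h0, ENNReal.log_zero,
    EReal.coe_mul_bot_of_neg (inv_q_sub_one_neg hq1)]
  simp [erealToENNReal]

lemma renyiDiv_eq_ofReal (hq1 : q < 1) {μ ν : Measure Ω} (h0 : hell q μ ν ≠ 0)
    (htop : hell q μ ν ≠ ⊤) :
    renyiDiv q μ ν = ENNReal.ofReal ((q - 1)⁻¹ * Real.log (hell q μ ν).toReal) := by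
  rw [renyiDiv_def' hq1.ne, ENNReal.log_pos_real h0 htop, ← EReal.coe_mul, erealToENNReal_coe]

lemma hell_ge_of_renyiDiv_le (hq0 : 0 < q) (hq1 : q < 1) {μ ν : Measure Ω}
    [IsProbabilityMeasure μ] [IsProbabilityMeasure ν] {M : ℝ≥0∞} (hM : M ≠ ⊤)
    (h : renyiDiv q μ ν ≤ M) :
    ENNReal.ofReal (Real.exp ((q - 1) * M.toReal)) ≤ hell q μ ν := by
  have hle1 := hell_le_one μ ν hq0 hq1
  have htop : hell q μ ν ≠ ⊤ := (hle1.trans_lt ENNReal.one_lt_top).ne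
  have h0 : hell q μ ν ≠ 0 := by
    intro h0
    rw [renyiDiv_eq_top_of_hell_eq_zero hq1 h0] at h
    exact hM (top_le_iff.mp h)
  rw [renyiDiv_eq_ofReal hq1 h0 htop] at h
  have hlr := (ENNReal.ofReal_le_iff_le_toReal hM).mp h
  have hc : q - 1 < 0 := by linarith
  have hci : (q - 1) * (q - 1)⁻¹ = 1 := mul_inv_cancel₀ (by intro h'; rw [h'] at hc; linarith)
  have hlog : (q - 1) * M.toReal ≤ Real.log (hell q μ ν).toReal := by
    have h2 := mul_le_mul_of_nonpos_left hlr hc.le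
    rwa [← mul_assoc, hci, one_mul] at h2
  have hpos : 0 < (hell q μ ν).toReal := ENNReal.toReal_pos h0 htop
  calc ENNReal.ofReal (Real.exp ((q - 1) * M.toReal))
      ≤ ENNReal.ofReal (hell q μ ν).toReal := by
        refine ENNReal.ofReal_le_ofReal ?_
        calc Real.exp ((q - 1) * M.toReal)
            ≤ Real.exp (Real.log (hell q μ ν).toReal) := Real.exp_le_exp.mpr hlog
          _ = (hell q μ ν).toReal := Real.exp_log hpos
    _ = hell q μ ν := ENNReal.ofReal_toReal htop

lemma renyiDiv_le_of_hell_ge (hq1 : q < 1) {μ ν : Measure Ω} {a b : ℝ}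
    (ha : 0 ≤ a) (hb : 0 ≤ b) (hle1 : hell q μ ν ≤ 1)
    (hge : ENNReal.ofReal (Real.exp ((q - 1) * (a + b))) ≤ hell q μ ν) :
    renyiDiv q μ ν ≤ ENNReal.ofReal a + ENNReal.ofReal b := by
  have htop : hell q μ ν ≠ ⊤ := (hle1.trans_lt ENNReal.one_lt_top).ne
  have h0 : hell q μ ν ≠ 0 :=
    (lt_of_lt_of_le (ENNReal.ofReal_pos.mpr (Real.exp_pos _)) hge).ne'
  rw [renyiDiv_eq_ofReal hq1 h0 htop, ← ENNReal.ofReal_add ha hb]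
  refine ENNReal.ofReal_le_ofReal ?_
  have hpos : 0 < (hell q μ ν).toReal := ENNReal.toReal_pos h0 htop
  have h1 : Real.exp ((q - 1) * (a + b)) ≤ (hell q μ ν).toReal :=
    (ENNReal.ofReal_le_iff_le_toReal htop).mp hge
  have hlog : (q - 1) * (a + b) ≤ Real.log (hell q μ ν).toReal := by
    calc (q - 1) * (a + b) = Real.log (Real.exp ((q - 1) * (a + b))) := (Real.log_exp _).symm
      _ ≤ _ := Real.log_le_log (Real.exp_pos _) h1
  have hc : q - 1 < 0 := by linarith
  have hci : (q - 1)⁻¹ * (q - 1) = 1 := inv_mul_cancel₀ (by intro h'; rw [h'] at hc; linarith)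
  have hcn : (q - 1)⁻¹ < 0 := inv_q_sub_one_neg hq1
  have h2 := mul_le_mul_of_nonpos_left hlog hcn.le
  rw [← mul_assoc, hci, one_mul] at h2
  exact h2

lemma compProd_eq_withDensity [MeasurableSpace.CountablyGenerated T]
    (μ ζ : Measure S) [IsFiniteMeasure μ] [IsFiniteMeasure ζ]
    (κ θ : Kernel S T) [IsFiniteKernel κ] [IsFiniteKernel θ]
    (hμζ : μ ≪ ζ) (hκθ : ∀ x, κ x ≪ θ x) :
    μ ⊗ₘ κ = (ζ ⊗ₘ θ).withDensity
      (fun p => μ.rnDeriv ζ p.1 * Kernel.rnDeriv κ θ p.1 p.2) := by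
  have hF : Measurable fun p : S × T => μ.rnDeriv ζ p.1 * Kernel.rnDeriv κ θ p.1 p.2 :=
    ((Measure.measurable_rnDeriv μ ζ).comp measurable_fst).mul (Kernel.measurable_rnDeriv κ θ)
  ext s hs
  rw [withDensity_apply _ hs, Measure.compProd_apply hs,
    ← lintegral_indicator hs, Measure.lintegral_compProd (hF.indicator hs)]
  have hinner : ∀ x, (∫⁻ y,
      s.indicator (fun p : S × T => μ.rnDeriv ζ p.1 * Kernel.rnDeriv κ θ p.1 p.2) (x, y) ∂(θ x))
      = μ.rnDeriv ζ x * κ x (Prod.mk x ⁻¹' s) := by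
    intro x
    have hsx : MeasurableSet (Prod.mk x ⁻¹' s) := measurable_prodMk_left hs
    have hK : Kernel.rnDeriv κ θ x =ᵐ[θ x] (κ x).rnDeriv (θ x) :=
      Kernel.rnDeriv_eq_rnDeriv_measure
    have hpt : ∀ y, s.indicator
        (fun p : S × T => μ.rnDeriv ζ p.1 * Kernel.rnDeriv κ θ p.1 p.2) (x, y)
        = (Prod.mk x ⁻¹' s).indicator
            (fun y => μ.rnDeriv ζ x * Kernel.rnDeriv κ θ x y) y := by
      intro y
      by_cases hy : (x, y) ∈ s
      · rw [Set.indicator_of_mem hy, Set.indicator_of_mem (by exact hy)]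
      · rw [Set.indicator_of_notMem hy, Set.indicator_of_notMem (by exact hy)]
    simp only [hpt]
    rw [lintegral_indicator hsx,
      lintegral_const_mul _ (Kernel.measurable_rnDeriv_right κ θ x)]
    congr 1
    rw [lintegral_congr_ae (ae_restrict_of_ae (hK.mono fun y hy => by rw [hy])),
      Measure.setLIntegral_rnDeriv' (hκθ x) hsx]
  simp only [hinner]
  rw [MeasureTheory.lintegral_rnDeriv_mul hμζ
    (Kernel.measurable_kernel_prodMk_left hs).aemeasurable]

lemma rnDeriv_compProd_ae [MeasurableSpace.CountablyGenerated T]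
    (μ ζ : Measure S) [IsFiniteMeasure μ] [IsFiniteMeasure ζ]
    (κ θ : Kernel S T) [IsFiniteKernel κ] [IsFiniteKernel θ]
    (hμζ : μ ≪ ζ) (hκθ : ∀ x, κ x ≪ θ x) :
    (μ ⊗ₘ κ).rnDeriv (ζ ⊗ₘ θ) =ᵐ[ζ ⊗ₘ θ]
      fun p => μ.rnDeriv ζ p.1 * Kernel.rnDeriv κ θ p.1 p.2 := by
  have hF : Measurable fun p : S × T => μ.rnDeriv ζ p.1 * Kernel.rnDeriv κ θ p.1 p.2 :=
    ((Measure.measurable_rnDeriv μ ζ).comp measurable_fst).mul (Kernel.measurable_rnDeriv κ θ)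
  have h := Measure.rnDeriv_withDensity (ζ ⊗ₘ θ) hF
  rwa [← compProd_eq_withDensity μ ζ κ θ hμζ hκθ] at h

/-- Chain rule for the Hellinger integral. -/
lemma hell_compProd [MeasurableSpace.CountablyGenerated T]
    (μX νX : Measure S) [IsProbabilityMeasure μX] [IsProbabilityMeasure νX]
    (κ η : Kernel S T) [IsMarkovKernel κ] [IsMarkovKernel η]
    (hq0 : 0 < q) (hq1 : q < 1) :
    hell q (μX ⊗ₘ κ) (νX ⊗ₘ η)
      = ∫⁻ x, (μX.rnDeriv (μX + νX) x) ^ q * (νX.rnDeriv (μX + νX) x) ^ (1 - q)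
          * hell q (κ x) (η x) ∂(μX + νX) := by
  set ζ : Measure S := μX + νX with hζdef
  set θ : Kernel S T := κ + η with hθdef
  have hκθ : ∀ x, κ x ≪ θ x := fun x => by
    rw [hθdef, Kernel.add_apply]; exact ac_add_left _ _
  have hηθ : ∀ x, η x ≪ θ x := fun x => by
    rw [hθdef, Kernel.add_apply]; exact ac_add_right _ _
  have hμζ : μX ≪ ζ := ac_add_left _ _
  have hνζ : νX ≪ ζ := ac_add_right _ _
  have h1 := rnDeriv_compProd_ae μX ζ κ θ hμζ hκθ
  have h2 := rnDeriv_compProd_ae νX ζ η θ hνζ hηθ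
  have habs1 : μX ⊗ₘ κ ≪ ζ ⊗ₘ θ := by
    rw [compProd_eq_withDensity μX ζ κ θ hμζ hκθ]
    exact withDensity_absolutelyContinuous _ _
  have habs2 : νX ⊗ₘ η ≪ ζ ⊗ₘ θ := by
    rw [compProd_eq_withDensity νX ζ η θ hνζ hηθ]
    exact withDensity_absolutelyContinuous _ _
  rw [← hell_eq habs1 habs2 hq0 hq1]
  have hstep1 : ∫⁻ p, ((μX ⊗ₘ κ).rnDeriv (ζ ⊗ₘ θ) p) ^ q
        * ((νX ⊗ₘ η).rnDeriv (ζ ⊗ₘ θ) p) ^ (1 - q) ∂(ζ ⊗ₘ θ)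
      = ∫⁻ p, (μX.rnDeriv ζ p.1) ^ q * (νX.rnDeriv ζ p.1) ^ (1 - q)
          * ((Kernel.rnDeriv κ θ p.1 p.2) ^ q * (Kernel.rnDeriv η θ p.1 p.2) ^ (1 - q))
          ∂(ζ ⊗ₘ θ) := by
    refine lintegral_congr_ae ?_
    filter_upwards [h1, h2] with p e1 e2
    rw [e1, e2, ENNReal.mul_rpow_of_nonneg _ _ hq0.le,
      ENNReal.mul_rpow_of_nonneg _ _ (by linarith : (0:ℝ) ≤ 1 - q)]
    ring
  rw [hstep1]
  have hmeas : Measurable fun p : S × T =>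
      (μX.rnDeriv ζ p.1) ^ q * (νX.rnDeriv ζ p.1) ^ (1 - q)
        * ((Kernel.rnDeriv κ θ p.1 p.2) ^ q * (Kernel.rnDeriv η θ p.1 p.2) ^ (1 - q)) :=
    ((((Measure.measurable_rnDeriv μX ζ).comp measurable_fst).pow_const _).mul
      (((Measure.measurable_rnDeriv νX ζ).comp measurable_fst).pow_const _)).mul
      (((Kernel.measurable_rnDeriv κ θ).pow_const _).mul
        ((Kernel.measurable_rnDeriv η θ).pow_const _))
  rw [Measure.lintegral_compProd hmeas]
  refine lintegral_congr fun x => ?_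
  have hmy : Measurable fun y =>
      (Kernel.rnDeriv κ θ x y) ^ q * (Kernel.rnDeriv η θ x y) ^ (1 - q) :=
    ((Kernel.measurable_rnDeriv_right κ θ x).pow_const _).mul
      ((Kernel.measurable_rnDeriv_right η θ x).pow_const _)
  have hconst := lintegral_const_mul (μ := θ x)
    ((μX.rnDeriv ζ x) ^ q * (νX.rnDeriv ζ x) ^ (1 - q)) hmy
  refine Eq.trans (by exact hconst) ?_
  congr 1
  have hKx : Kernel.rnDeriv κ θ x =ᵐ[θ x] (κ x).rnDeriv (θ x) :=
    Kernel.rnDeriv_eq_rnDeriv_measure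
  have hEx : Kernel.rnDeriv η θ x =ᵐ[θ x] (η x).rnDeriv (θ x) :=
    Kernel.rnDeriv_eq_rnDeriv_measure
  have hθx : θ x = κ x + η x := by rw [hθdef, Kernel.add_apply]
  calc ∫⁻ y, (Kernel.rnDeriv κ θ x y) ^ q * (Kernel.rnDeriv η θ x y) ^ (1 - q) ∂(θ x)
      = ∫⁻ y, ((κ x).rnDeriv (θ x) y) ^ q * ((η x).rnDeriv (θ x) y) ^ (1 - q) ∂(θ x) := by
        refine lintegral_congr_ae ?_
        filter_upwards [hKx, hEx] with y ey1 ey2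
        rw [ey1, ey2]
    _ = hell q (κ x) (η x) := by rw [hell, hθx]

/-- **Rényi composition rule for `q ∈ (0, 1)`.** -/
theorem renyi_composition_rule_lt_one [StandardBorelSpace S] [StandardBorelSpace T]
    (μXY νXY : Measure (S × T)) [IsProbabilityMeasure μXY] [IsProbabilityMeasure νXY]
    (κ η : Kernel S T) [IsMarkovKernel κ] [IsMarkovKernel η]
    (hκ : μXY = μXY.fst ⊗ₘ κ) (hη : νXY = νXY.fst ⊗ₘ η)
    (q : ℝ) (hq0 : 0 < q) (hq1 : q < 1) :
    renyiDiv q μXY νXY ≤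
      renyiDiv q μXY.fst νXY.fst +
        essSup (fun x => renyiDiv q (κ x) (η x)) (μXY.fst ⊓ νXY.fst) := by
  by_cases hA : renyiDiv q μXY.fst νXY.fst = ⊤
  · rw [hA, top_add]; exact le_top
  by_cases hM : essSup (fun x => renyiDiv q (κ x) (η x)) (μXY.fst ⊓ νXY.fst) = ⊤
  · rw [hM, add_top]; exact le_top
  set μX := μXY.fst with hμX
  set νX := νXY.fst with hνX
  set M := essSup (fun x => renyiDiv q (κ x) (η x)) (μX ⊓ νX) with hMdef
  set ζ : Measure S := μX + νX with hζdef
  have hμζ : μX ≪ ζ := ac_add_left _ _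
  have hνζ : νX ≪ ζ := ac_add_right _ _
  set f := μX.rnDeriv ζ with hfdef
  set g := νX.rnDeriv ζ with hgdef
  have hmeasf : Measurable f := Measure.measurable_rnDeriv _ _
  have hmeasg : Measurable g := Measure.measurable_rnDeriv _ _
  have hmeasfg : Measurable fun x => f x ^ q * g x ^ (1 - q) :=
    (hmeasf.pow_const _).mul (hmeasg.pow_const _)
  -- the withDensity of the pointwise min is below the measure inf
  have hmin_le : ζ.withDensity (fun x => min (f x) (g x)) ≤ μX ⊓ νX := by
    refine le_inf ?_ ?_
    · calc ζ.withDensity (fun x => min (f x) (g x))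
          ≤ ζ.withDensity f := withDensity_mono (ae_of_all _ fun x => min_le_left _ _)
        _ = μX := Measure.withDensity_rnDeriv_eq _ _ hμζ
    · calc ζ.withDensity (fun x => min (f x) (g x))
          ≤ ζ.withDensity g := withDensity_mono (ae_of_all _ fun x => min_le_right _ _)
        _ = νX := Measure.withDensity_rnDeriv_eq _ _ hνζ
  have hae : ∀ᵐ x ∂(μX ⊓ νX), renyiDiv q (κ x) (η x) ≤ M := ENNReal.ae_le_essSup _
  set N : Set S := {x | ¬ renyiDiv q (κ x) (η x) ≤ M} with hNdef
  have hN0 : (μX ⊓ νX) N = 0 := ae_iff.mp hae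
  set N' := toMeasurable (μX ⊓ νX) N with hN'def
  have hN'0 : (μX ⊓ νX) N' = 0 := by rw [hN'def, measure_toMeasurable]; exact hN0
  have hN'm : MeasurableSet N' := measurableSet_toMeasurable _ _
  have hmeasmin : Measurable fun x => min (f x) (g x) := hmeasf.min hmeasg
  have hint0 : ∫⁻ x in N', min (f x) (g x) ∂ζ = 0 := by
    have h := Measure.le_iff'.mp hmin_le N'
    rw [withDensity_apply _ hN'm] at h
    exact le_antisymm (h.trans hN'0.le) zero_le
  have hmin0 : ∀ᵐ x ∂ζ, x ∈ N' → min (f x) (g x) = 0 := by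
    have h := (lintegral_eq_zero_iff hmeasmin).mp hint0
    refine (ae_restrict_iff' hN'm).mp ?_
    filter_upwards [h] with x hx using hx
  -- pointwise lower bound on the conditional Hellinger integrals
  have hcm : ∀ᵐ x ∂ζ,
      f x ^ q * g x ^ (1 - q) * ENNReal.ofReal (Real.exp ((q - 1) * M.toReal))
        ≤ f x ^ q * g x ^ (1 - q) * hell q (κ x) (η x) := by
    filter_upwards [hmin0] with x hx
    by_cases hxN : x ∈ N
    · have h0 := hx (subset_toMeasurable _ _ hxN)
      rcases le_total (f x) (g x) with hfg | hfg
      · rw [min_eq_left hfg] at h0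
        rw [h0, ENNReal.zero_rpow_of_pos hq0, zero_mul, zero_mul, zero_mul]
      · rw [min_eq_right hfg] at h0
        rw [h0, ENNReal.zero_rpow_of_pos (by linarith : (0:ℝ) < 1 - q), mul_zero, zero_mul,
          zero_mul]
    · have hle : renyiDiv q (κ x) (η x) ≤ M := by
        by_contra hcon
        exact hxN hcon
      exact mul_le_mul_right (hell_ge_of_renyiDiv_le hq0 hq1 hM hle) _
  -- chain rule
  have hHtot : hell q μXY νXY = ∫⁻ x, f x ^ q * g x ^ (1 - q) * hell q (κ x) (η x) ∂ζ := by
    conv_lhs => rw [hκ, hη]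
    exact hell_compProd μX νX κ η hq0 hq1
  have hHX : hell q μX νX = ∫⁻ x, f x ^ q * g x ^ (1 - q) ∂ζ := rfl
  have hgeX : ENNReal.ofReal (Real.exp ((q - 1) * (renyiDiv q μX νX).toReal))
      ≤ hell q μX νX := hell_ge_of_renyiDiv_le hq0 hq1 hA le_rfl
  have hchain : ENNReal.ofReal
      (Real.exp ((q - 1) * ((renyiDiv q μX νX).toReal + M.toReal)))
      ≤ hell q μXY νXY := by
    rw [hHtot]
    calc ENNReal.ofReal (Real.exp ((q - 1) * ((renyiDiv q μX νX).toReal + M.toReal)))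
        = ENNReal.ofReal (Real.exp ((q - 1) * (renyiDiv q μX νX).toReal)
            * Real.exp ((q - 1) * M.toReal)) := by
          rw [← Real.exp_add]; ring_nf
      _ = ENNReal.ofReal (Real.exp ((q - 1) * (renyiDiv q μX νX).toReal))
            * ENNReal.ofReal (Real.exp ((q - 1) * M.toReal)) :=
          ENNReal.ofReal_mul (Real.exp_nonneg _)
      _ ≤ hell q μX νX * ENNReal.ofReal (Real.exp ((q - 1) * M.toReal)) :=
          mul_le_mul_left hgeX _
      _ = ∫⁻ x, f x ^ q * g x ^ (1 - q) * ENNReal.ofReal (Real.exp ((q - 1) * M.toReal)) ∂ζ := by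
          rw [hHX, ← lintegral_mul_const _ hmeasfg]
      _ ≤ ∫⁻ x, f x ^ q * g x ^ (1 - q) * hell q (κ x) (η x) ∂ζ := lintegral_mono_ae hcm
  have hle1tot : hell q μXY νXY ≤ 1 := hell_le_one _ _ hq0 hq1
  have hfin := renyiDiv_le_of_hell_ge hq1 ENNReal.toReal_nonneg ENNReal.toReal_nonneg
    hle1tot hchain
  rwa [ENNReal.ofReal_toReal hA, ENNReal.ofReal_toReal hM] at hfin

end SCR
end
end

section
/- Convexity principle for Rényi divergences: Let q ∈ (0,∞), q ≠ 1, let P be a Markov kernel on a Polish space X, and let ρ : X×X → [0,∞] be a measurable function such that R_q(δ_x P ∥ δ_y P) ≤ ρ(x,y) for all x,y ∈ X. Then for all probability measures μ, ν on X, R_q(μP ∥ νP) ≤ inf_{γ ∈ C(μ,ν)} (1/(q−1)) log ∫ exp((q−1)·ρ(x,y)) γ(dx,dy). -/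
open MeasureTheory ProbabilityTheory ENNReal Matrix

noncomputable section

namespace SCR

open scoped Classical

variable {Ω S T : Type*} [MeasurableSpace Ω] [MeasurableSpace S] [MeasurableSpace T]

/-! ### Auxiliary lemmas -/

section Holder

variable {Z : Type*} [MeasurableSpace Z]

/-- Hölder's inequality for `0 < q < 1`. -/
lemma holder_aux {q : ℝ} (hq0 : 0 < q) (hq1 : q < 1) (κ : Measure Z)
    (U V : Z → ℝ≥0∞) (hU : Measurable U) (hV : Measurable V) :
    ∫⁻ z, U z ^ q * V z ^ (1 - q) ∂κ ≤ (∫⁻ z, U z ∂κ) ^ q * (∫⁻ z, V z ∂κ) ^ (1 - q) := by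
  have hpq : (1/q).HolderConjugate (1/(1-q)) := by
    constructor
    · rw [one_div, one_div, inv_inv, inv_inv, inv_one]; ring
    · positivity
    · exact one_div_pos.mpr (by linarith)
  have h := ENNReal.lintegral_mul_le_Lp_mul_Lq κ hpq
    ((hU.pow_const q).aemeasurable) ((hV.pow_const (1-q)).aemeasurable)
  simp only [Pi.mul_apply] at h
  calc ∫⁻ z, U z ^ q * V z ^ (1 - q) ∂κ
      ≤ (∫⁻ z, (U z ^ q) ^ (1/q) ∂κ) ^ (1 / (1/q)) *
        (∫⁻ z, (V z ^ (1-q)) ^ (1/(1-q)) ∂κ) ^ (1 / (1/(1-q))) := h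
    _ = (∫⁻ z, U z ∂κ) ^ q * (∫⁻ z, V z ∂κ) ^ (1 - q) := by
        rw [one_div_one_div, one_div_one_div]
        congr 1
        · congr 1; refine lintegral_congr fun z => ?_
          rw [← ENNReal.rpow_mul, mul_one_div_cancel hq0.ne', ENNReal.rpow_one]
        · congr 1; refine lintegral_congr fun z => ?_
          rw [← ENNReal.rpow_mul, mul_one_div_cancel (by linarith : (1:ℝ)-q ≠ 0), ENNReal.rpow_one]

/-- Reverse Hölder's inequality for `q > 1`. -/
lemma reverse_holder_aux {q : ℝ} (hq : 1 < q) (κ : Measure Z)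
    (U V : Z → ℝ≥0∞) (hU : Measurable U) (hV : Measurable V) :
    (∫⁻ z, U z ∂κ) ^ q * (∫⁻ z, V z ∂κ) ^ (1 - q) ≤ ∫⁻ z, U z ^ q * V z ^ (1 - q) ∂κ := by
  set A := ∫⁻ z, U z ∂κ with hA
  set B := ∫⁻ z, V z ∂κ with hB
  set S := ∫⁻ z, U z ^ q * V z ^ (1 - q) ∂κ with hS
  have hq0 : (0:ℝ) < q := by linarith
  by_cases hStop : S = ⊤
  · exact hStop ▸ le_top
  by_cases hBtop : B = ⊤
  · rw [hBtop, ENNReal.top_rpow_of_neg (by linarith), mul_zero]; exact zero_le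
  by_cases hB0 : B = 0
  · have hV0 : V =ᵐ[κ] 0 := (lintegral_eq_zero_iff hV).mp hB0
    by_cases hA0 : A = 0
    · rw [hA0, ENNReal.zero_rpow_of_pos hq0, zero_mul]; exact zero_le
    · exfalso; apply hStop
      have h1 : S = ∫⁻ z, ⊤ * U z ^ q ∂κ := by
        refine lintegral_congr_ae ?_
        filter_upwards [hV0] with z hz
        rw [hz]; simp only [Pi.zero_apply]
        rw [ENNReal.zero_rpow_of_neg (by linarith), mul_comm]
      rw [h1, lintegral_const_mul _ (hU.pow_const q), ENNReal.top_mul]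
      intro h2
      apply hA0
      rw [hA, lintegral_eq_zero_iff hU]
      have h3 := (lintegral_eq_zero_iff (hU.pow_const q)).mp h2
      filter_upwards [h3] with z hz
      simpa [ENNReal.rpow_eq_zero_iff, hq0, not_lt.mpr hq0.le] using hz
  -- main case
  have hVlt : ∀ᵐ z ∂κ, V z < ⊤ := ae_lt_top hV hBtop
  by_cases hnull : κ {z | V z = 0 ∧ U z ≠ 0} = 0
  · have hae : ∀ᵐ z ∂κ, ¬(V z = 0 ∧ U z ≠ 0) := by
      rw [ae_iff]; simpa using hnull
    have hpq : q.HolderConjugate (q/(q-1)) := Real.HolderConjugate.conjExponent hq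
    set f := fun z => (U z ^ q * V z ^ (1 - q)) ^ (1/q) with hf
    set g := fun z => V z ^ ((q-1)/q) with hg
    have hfm : Measurable f := ((hU.pow_const q).mul (hV.pow_const (1-q))).pow_const _
    have hgm : Measurable g := hV.pow_const _
    have hpt : ∀ᵐ z ∂κ, U z ≤ f z * g z := by
      filter_upwards [hVlt, hae] with z hz1 hz2
      by_cases hVz : V z = 0
      · have hUz : U z = 0 := by by_contra h; exact hz2 ⟨hVz, h⟩
        rw [hUz]; exact zero_le
      · have : f z * g z = U z := by
          rw [hf, hg]
          simp only
          rw [ENNReal.mul_rpow_of_nonneg _ _ (by positivity : (0:ℝ) ≤ 1/q),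
            ← ENNReal.rpow_mul, ← ENNReal.rpow_mul,
            mul_one_div_cancel hq0.ne', ENNReal.rpow_one, mul_assoc,
            ← ENNReal.rpow_add _ _ hVz hz1.ne]
          rw [show (1-q) * (1/q) + (q-1)/q = 0 by field_simp; ring]
          rw [ENNReal.rpow_zero, mul_one]
        rw [this]
    have hAle : A ≤ S ^ (1/q) * B ^ ((q-1)/q) := by
      have h1 : A ≤ ∫⁻ z, f z * g z ∂κ := lintegral_mono_ae hpt
      have h2 := ENNReal.lintegral_mul_le_Lp_mul_Lq κ hpq hfm.aemeasurable hgm.aemeasurable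
      simp only [Pi.mul_apply] at h2
      refine h1.trans (h2.trans ?_)
      have e1 : ∫⁻ z, f z ^ q ∂κ = S := by
        refine lintegral_congr fun z => ?_
        rw [hf]; simp only
        rw [← ENNReal.rpow_mul, one_div_mul_cancel hq0.ne', ENNReal.rpow_one]
      have e2 : ∫⁻ z, g z ^ (q/(q-1)) ∂κ = B := by
        refine lintegral_congr fun z => ?_
        rw [hg]; simp only
        have hq1' : q - 1 ≠ 0 := by linarith
        rw [← ENNReal.rpow_mul, show (q-1)/q * (q/(q-1)) = 1 by field_simp, ENNReal.rpow_one]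
      rw [e1, e2, one_div_div]
    have hfin : A ^ q ≤ S * B ^ (q-1) := by
      calc A ^ q ≤ (S ^ (1/q) * B ^ ((q-1)/q)) ^ q :=
            ENNReal.rpow_le_rpow hAle hq0.le
        _ = S * B ^ (q-1) := by
            rw [ENNReal.mul_rpow_of_nonneg _ _ hq0.le, ← ENNReal.rpow_mul, ← ENNReal.rpow_mul,
              one_div_mul_cancel hq0.ne', ENNReal.rpow_one, div_mul_cancel₀ _ hq0.ne']
    calc A ^ q * B ^ (1-q) ≤ (S * B ^ (q-1)) * B ^ (1-q) :=
          mul_le_mul_left hfin _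
      _ = S * (B ^ (q-1) * B ^ (1-q)) := by rw [mul_assoc]
      _ = S := by
          rw [← ENNReal.rpow_add _ _ hB0 hBtop]
          norm_num
  · -- the bad set has positive measure: S = ⊤
    exfalso; apply hStop
    set E := {z | V z = 0 ∧ U z ≠ 0} with hE
    have hEm : MeasurableSet E :=
      (hV (measurableSet_singleton 0)).inter (hU (measurableSet_singleton 0)).compl
    have h1 : ∀ z ∈ E, U z ^ q * V z ^ (1 - q) = ⊤ := by
      rintro z ⟨hz1, hz2⟩
      rw [hz1, ENNReal.zero_rpow_of_neg (by linarith), ENNReal.mul_top]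
      simp [ENNReal.rpow_eq_zero_iff, hz2, not_lt.mpr hq0.le]
    have : ⊤ ≤ S := by
      calc (⊤:ℝ≥0∞) = ∫⁻ _ in E, ⊤ ∂κ := by
            rw [setLIntegral_const, ENNReal.top_mul hnull]
        _ = ∫⁻ z in E, U z ^ q * V z ^ (1 - q) ∂κ :=
            (setLIntegral_congr_fun hEm (fun z hz => (h1 z hz).symm))
        _ ≤ S := setLIntegral_le_lintegral _ _
    exact top_le_iff.mp this

end Holder

section ERealAux

lemma erealToENNReal_mono {x y : EReal} (h : x ≤ y) :
    erealToENNReal x ≤ erealToENNReal y := by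
  unfold erealToENNReal
  by_cases hy : y = ⊤
  · simp [hy]
  · have hx : x ≠ ⊤ := fun hx => hy (top_le_iff.mp (hx ▸ h))
    rw [if_neg hx, if_neg hy]
    by_cases hxb : x = ⊥
    · simp [hxb, EReal.toReal_bot]
    · exact ENNReal.ofReal_le_ofReal (EReal.toReal_le_toReal h hxb hy)

lemma coe_ennreal_eq_toReal (x : ℝ≥0∞) (hx : x ≠ ⊤) :
    (x : EReal) = ((x.toReal : ℝ) : EReal) := by
  rw [← ENNReal.ofReal_toReal hx, EReal.coe_ennreal_ofReal, max_eq_left ENNReal.toReal_nonneg,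
    ENNReal.toReal_ofReal ENNReal.toReal_nonneg]

/-- From the Rényi-divergence bound for `q > 1`, bound the integral by `exp ((q-1) ρ)`. -/
lemma conv_gt {c : ℝ} (hc : 0 < c) {I ρ' : ℝ≥0∞}
    (h : erealToENNReal (((c⁻¹ : ℝ) : EReal) * ENNReal.log I) ≤ ρ') :
    I ≤ EReal.exp ((c : EReal) * (ρ' : EReal)) := by
  rw [← ENNReal.exp_log I]
  apply EReal.exp_monotone
  set L := ENNReal.log I with hL
  by_cases hL0 : L ≤ 0
  · exact hL0.trans (mul_nonneg (by exact_mod_cast hc.le) (EReal.coe_ennreal_nonneg ρ'))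
  push_neg at hL0
  by_cases hρtop : ρ' = ⊤
  · rw [hρtop, EReal.coe_ennreal_top, EReal.coe_mul_top_of_pos hc]
    exact le_top
  have hLbot : L ≠ ⊥ := fun hb => absurd (hb ▸ hL0) (by simp)
  by_cases hLtop : L = ⊤
  · exfalso
    rw [hLtop, EReal.coe_mul_top_of_pos (inv_pos.mpr hc)] at h
    rw [erealToENNReal] at h
    simp only [if_pos rfl] at h
    exact hρtop (top_le_iff.mp h)
  obtain ⟨l, hLl⟩ : ∃ l : ℝ, L = (l : EReal) := ⟨L.toReal, (EReal.coe_toReal hLtop hLbot).symm⟩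
  rw [hLl] at h hL0 ⊢
  · have hl : 0 < l := by exact_mod_cast hL0
    rw [← EReal.coe_mul, erealToENNReal, if_neg (EReal.coe_ne_top _),
      EReal.toReal_coe] at h
    have h2 : c⁻¹ * l ≤ ρ'.toReal := by
      rw [ENNReal.ofReal_le_iff_le_toReal hρtop] at h
      exact h
    have h3 : l ≤ c * ρ'.toReal := by
      calc l = c * (c⁻¹ * l) := (mul_inv_cancel_left₀ hc.ne' l).symm
        _ ≤ c * ρ'.toReal := by nlinarith
    rw [coe_ennreal_eq_toReal ρ' hρtop, ← EReal.coe_mul]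
    exact_mod_cast h3

/-- From the Rényi-divergence bound for `q < 1`, bound `exp ((q-1) ρ)` by the integral. -/
lemma conv_lt {c : ℝ} (hc : c < 0) {I ρ' : ℝ≥0∞} (hI : I ≤ 1)
    (h : erealToENNReal (((c⁻¹ : ℝ) : EReal) * ENNReal.log I) ≤ ρ') :
    EReal.exp ((c : EReal) * (ρ' : EReal)) ≤ I := by
  rw [← ENNReal.exp_log I]
  apply EReal.exp_monotone
  set L := ENNReal.log I with hL
  by_cases hρtop : ρ' = ⊤
  · rw [hρtop, EReal.coe_ennreal_top, EReal.coe_mul_top_of_neg hc]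
    exact bot_le
  have hL0 : L ≤ 0 := by rw [hL]; simpa using hI
  by_cases hLbot : L = ⊥
  · exfalso
    rw [hLbot, EReal.coe_mul_bot_of_neg (by exact_mod_cast inv_neg''.mpr hc : (c⁻¹:ℝ) < 0)] at h
    rw [erealToENNReal] at h
    simp only [if_pos rfl] at h
    exact hρtop (top_le_iff.mp h)
  have hLtop : L ≠ ⊤ := fun ht => by simp [ht] at hL0
  obtain ⟨l, hLl⟩ : ∃ l : ℝ, L = (l : EReal) := ⟨L.toReal, (EReal.coe_toReal hLtop hLbot).symm⟩
  rw [hLl] at h hL0 ⊢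
  · have hl : l ≤ 0 := by exact_mod_cast hL0
    rw [← EReal.coe_mul, erealToENNReal, if_neg (EReal.coe_ne_top _),
      EReal.toReal_coe] at h
    have h2 : c⁻¹ * l ≤ ρ'.toReal := by
      rw [ENNReal.ofReal_le_iff_le_toReal hρtop] at h
      exact h
    have h3 : c * ρ'.toReal ≤ l := by
      have := mul_le_mul_of_nonpos_left h2 hc.le
      calc c * ρ'.toReal ≤ c * (c⁻¹ * l) := this
        _ = l := mul_inv_cancel_left₀ hc.ne l
    rw [coe_ennreal_eq_toReal ρ' hρtop, ← EReal.coe_mul]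
    exact_mod_cast h3

lemma final_gt {c : ℝ} (hc : 0 < c) {a b : ℝ≥0∞} (h : a ≤ b) :
    erealToENNReal (((c : ℝ) : EReal) * ENNReal.log a) ≤
      erealToENNReal (((c : ℝ) : EReal) * ENNReal.log b) := by
  apply erealToENNReal_mono
  exact mul_le_mul_of_nonneg_left (ENNReal.log_le_log_iff.mpr h) (by exact_mod_cast hc.le)

lemma final_lt {c : ℝ} (hc : c < 0) {a b : ℝ≥0∞} (h : b ≤ a) :
    erealToENNReal (((c : ℝ) : EReal) * ENNReal.log a) ≤
      erealToENNReal (((c : ℝ) : EReal) * ENNReal.log b) := by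
  apply erealToENNReal_mono
  have h1 : ENNReal.log b ≤ ENNReal.log a := ENNReal.log_le_log_iff.mpr h
  have h2 : ((-c : ℝ) : EReal) * ENNReal.log b ≤ ((-c : ℝ) : EReal) * ENNReal.log a :=
    mul_le_mul_of_nonneg_left h1 (by exact_mod_cast (neg_pos.mpr hc).le)
  have h3 : ∀ x : EReal, ((c : ℝ) : EReal) * x = -(((-c : ℝ) : EReal) * x) := by
    intro x
    rw [show ((-c : ℝ) : EReal) = -((c:ℝ) : EReal) by exact_mod_cast EReal.coe_neg c,
      EReal.neg_mul, neg_neg]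
  rw [h3, h3]
  exact EReal.neg_le_neg_iff.mpr h2

end ERealAux

/-- **Convexity principle for Rényi divergences** (Theorem 2.5(2) of the paper). -/
theorem convexity_principle_renyi {X : Type*} [MeasurableSpace X]
    [TopologicalSpace X] [PolishSpace X] [BorelSpace X]
    (q : ℝ) (hq0 : 0 < q) (hq1 : q ≠ 1)
    (P : Kernel X X) [IsMarkovKernel P]
    (ρ : X → X → ℝ≥0∞) (hρ : Measurable (Function.uncurry ρ))
    (hone : ∀ x y, renyiDiv q (P x) (P y) ≤ ρ x y)
    (μ ν : Measure X) [IsProbabilityMeasure μ] [IsProbabilityMeasure ν] :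
    renyiDiv q (μ.bind (fun x => P x)) (ν.bind (fun x => P x)) ≤
      ⨅ γ ∈ {γ : Measure (X × X) | IsCoupling γ μ ν},
        erealToENNReal ((((q - 1)⁻¹ : ℝ) : EReal) *
          ENNReal.log (∫⁻ p, EReal.exp (((q - 1 : ℝ) : EReal) * (ρ p.1 p.2 : EReal)) ∂γ)) := by
  refine le_iInf fun γ => le_iInf fun hγ => ?_
  obtain ⟨hγ1, hγ2⟩ := hγ
  haveI : Nonempty X := by
    by_contra h
    have h1 : (Set.univ : Set X) = ∅ := Set.univ_eq_empty_iff.mpr (not_nonempty_iff.mp h)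
    have h2 : μ Set.univ = 1 := measure_univ
    rw [h1, measure_empty] at h2
    exact zero_ne_one h2
  haveI hγprob : IsProbabilityMeasure γ := by
    constructor
    have h : γ.fst Set.univ = 1 := by rw [hγ1]; exact measure_univ
    rwa [Measure.fst_univ] at h
  set Pμ : Measure X := μ.bind (fun x => P x) with hPμ
  set Pν : Measure X := ν.bind (fun x => P x) with hPν
  set m : Measure X := Pμ + Pν with hm
  -- the kernels
  set K : Kernel (X × X) X :=
    P.comap Prod.fst measurable_fst + P.comap Prod.snd measurable_snd with hK
  have hKapp : ∀ p : X × X, K p = P p.1 + P p.2 := fun p => by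
    rw [hK, Kernel.add_apply, Kernel.comap_apply, Kernel.comap_apply]
  set u : (X × X) → X → ℝ≥0∞ := Kernel.rnDeriv (P.comap Prod.fst measurable_fst) K with hu_def
  set v : (X × X) → X → ℝ≥0∞ := Kernel.rnDeriv (P.comap Prod.snd measurable_snd) K with hv_def
  have hum : Measurable (Function.uncurry u) := Kernel.measurable_rnDeriv _ _
  have hvm : Measurable (Function.uncurry v) := Kernel.measurable_rnDeriv _ _
  have hu' : ∀ p : X × X, u p =ᵐ[K p] (P p.1).rnDeriv (K p) := by
    intro p
    have h := Kernel.rnDeriv_eq_rnDeriv_measure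
      (κ := P.comap Prod.fst measurable_fst) (η := K) (a := p)
    rwa [Kernel.comap_apply] at h
  have hv' : ∀ p : X × X, v p =ᵐ[K p] (P p.2).rnDeriv (K p) := by
    intro p
    have h := Kernel.rnDeriv_eq_rnDeriv_measure
      (κ := P.comap Prod.snd measurable_snd) (η := K) (a := p)
    rwa [Kernel.comap_apply] at h
  have hKac1 : ∀ p : X × X, P p.1 ≪ K p := fun p => by
    rw [hKapp p]; exact Measure.absolutelyContinuous_of_le (Measure.le_add_right le_rfl)
  have hKac2 : ∀ p : X × X, P p.2 ≪ K p := fun p => by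
    rw [hKapp p]; exact Measure.absolutelyContinuous_of_le (Measure.le_add_left le_rfl)
  have hu_setint : ∀ p : X × X, ∀ A : Set X, MeasurableSet A →
      ∫⁻ z in A, u p z ∂(K p) = P p.1 A := by
    intro p A hA
    rw [lintegral_congr_ae (ae_restrict_of_ae (hu' p)),
      Measure.setLIntegral_rnDeriv' (hKac1 p) hA]
  have hv_setint : ∀ p : X × X, ∀ A : Set X, MeasurableSet A →
      ∫⁻ z in A, v p z ∂(K p) = P p.2 A := by
    intro p A hA
    rw [lintegral_congr_ae (ae_restrict_of_ae (hv' p)),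
      Measure.setLIntegral_rnDeriv' (hKac2 p) hA]
  have hu_int : ∀ p : X × X, ∫⁻ z, u p z ∂(K p) = 1 := by
    intro p
    have h := hu_setint p Set.univ MeasurableSet.univ
    rwa [Measure.restrict_univ, measure_univ] at h
  have hv_int : ∀ p : X × X, ∫⁻ z, v p z ∂(K p) = 1 := by
    intro p
    have h := hv_setint p Set.univ MeasurableSet.univ
    rwa [Measure.restrict_univ, measure_univ] at h
  -- the joint measure and its two disintegrations
  set Γ : Measure (X × (X × X)) := (γ.compProd K).map Prod.swap with hΓ
  have hswap : ∀ F : X × (X × X) → ℝ≥0∞, Measurable F →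
      ∫⁻ x, F x ∂Γ = ∫⁻ p, ∫⁻ z, F (z, p) ∂(K p) ∂γ := by
    intro F hF
    rw [hΓ, lintegral_map hF measurable_swap]
    exact Measure.lintegral_compProd (hF.comp measurable_swap)
  have hbind : ∀ (θ : Measure X), IsProbabilityMeasure θ → ∀ A : Set X, MeasurableSet A →
      (θ.bind (fun x => P x)) A = ∫⁻ x, P x A ∂θ := by
    intro θ _ A hA
    exact Measure.bind_apply hA (Kernel.measurable P).aemeasurable
  haveI hPμprob : IsProbabilityMeasure Pμ := by
    constructor
    rw [hPμ, hbind μ inferInstance Set.univ MeasurableSet.univ]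
    simp [measure_univ]
  haveI hPνprob : IsProbabilityMeasure Pν := by
    constructor
    rw [hPν, hbind ν inferInstance Set.univ MeasurableSet.univ]
    simp [measure_univ]
  have hfstΓ : Γ.fst = m := by
    have h1 : Γ.fst = (γ.compProd K).snd := by
      rw [hΓ, Measure.fst, Measure.snd, Measure.map_map measurable_fst measurable_swap]
      rfl
    rw [h1]
    ext A hA
    rw [Measure.snd_apply hA, Measure.compProd_apply (measurable_snd hA)]
    have h2 : ∀ p : X × X, K p (Prod.mk p ⁻¹' (Prod.snd ⁻¹' A)) = P p.1 A + P p.2 A := by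
      intro p
      have : Prod.mk p ⁻¹' (Prod.snd ⁻¹' A) = A := by ext z; simp
      rw [this, hKapp p, Measure.add_apply]
    rw [lintegral_congr fun p => h2 p]
    have hm1 : Measurable (fun p : X × X => P p.1 A) := (P.measurable_coe hA).comp measurable_fst
    rw [lintegral_add_left hm1]
    have e1 : ∫⁻ p, P p.1 A ∂γ = Pμ A := by
      rw [hPμ, hbind μ inferInstance A hA, ← hγ1, Measure.fst,
        lintegral_map (P.measurable_coe hA) measurable_fst]
    have e2 : ∫⁻ p, P p.2 A ∂γ = Pν A := by
      rw [hPν, hbind ν inferInstance A hA, ← hγ2, Measure.snd,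
        lintegral_map (P.measurable_coe hA) measurable_snd]
    rw [e1, e2, hm, Measure.add_apply]
  set κc : Kernel X (X × X) := Γ.condKernel with hκc
  have hdis : m ⊗ₘ κc = Γ := by
    rw [hκc, ← hfstΓ]
    exact Measure.disintegrate ..
  have hcond : ∀ F : X × (X × X) → ℝ≥0∞, Measurable F →
      ∫⁻ x, F x ∂Γ = ∫⁻ z, ∫⁻ p, F (z, p) ∂(κc z) ∂m := by
    intro F hF
    rw [← hdis, Measure.lintegral_compProd hF]
  -- the densities of Pμ and Pν with respect to m
  set f : X → ℝ≥0∞ := fun z => ∫⁻ p, u p z ∂(κc z) with hf_def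
  set g : X → ℝ≥0∞ := fun z => ∫⁻ p, v p z ∂(κc z) with hg_def
  have humz : ∀ z : X, Measurable fun p => u p z := fun z =>
    hum.comp (measurable_id.prodMk measurable_const)
  have hvmz : ∀ z : X, Measurable fun p => v p z := fun z =>
    hvm.comp (measurable_id.prodMk measurable_const)
  have hum' : Measurable (fun x : X × (X × X) => u x.2 x.1) := hum.comp measurable_swap
  have hvm' : Measurable (fun x : X × (X × X) => v x.2 x.1) := hvm.comp measurable_swap
  have hfm : Measurable f := by
    rw [hf_def]
    exact Measurable.lintegral_kernel_prod_right hum'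
  have hgm : Measurable g := by
    rw [hg_def]
    exact Measurable.lintegral_kernel_prod_right hvm'
  have hwd : ∀ (w : (X × X) → X → ℝ≥0∞), Measurable (fun x : X × (X × X) => w x.2 x.1) →
      ∀ (c : X × X → X), Measurable c →
      (∀ p : X × X, ∀ A : Set X, MeasurableSet A →
        ∫⁻ z in A, w p z ∂(K p) = P (c p) A) →
      m.withDensity (fun z => ∫⁻ p, w p z ∂(κc z)) = (γ.map c).bind (fun x => P x) := by
    intro w hw c hc hwθ
    ext A hA
    rw [withDensity_apply _ hA]
    set F : X × (X × X) → ℝ≥0∞ :=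
      fun x => A.indicator (fun _ => (1:ℝ≥0∞)) x.1 * w x.2 x.1 with hF
    have hFm : Measurable F :=
      ((measurable_const.indicator hA).comp measurable_fst).mul hw
    have e1 : ∫⁻ x, F x ∂Γ = ∫⁻ z in A, (∫⁻ p, w p z ∂(κc z)) ∂m := by
      rw [hcond F hFm]
      have h5 : ∀ z : X, ∫⁻ p, F (z, p) ∂(κc z)
          = A.indicator (fun z' => ∫⁻ p, w p z' ∂(κc z')) z := by
        intro z
        rw [hF]
        simp only
        have hw2 : Measurable fun p : X × X => w p z := hw.comp measurable_prodMk_left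
        rw [lintegral_const_mul _ hw2]
        by_cases hz : z ∈ A <;> simp [hz]
      rw [lintegral_congr h5, lintegral_indicator hA]
    have e2 : ∫⁻ x, F x ∂Γ = ((γ.map c).bind (fun x => P x)) A := by
      rw [hswap F hFm]
      have h6 : ∀ p : X × X, ∫⁻ z, F (z, p) ∂(K p) = P (c p) A := by
        intro p
        rw [hF]
        simp only
        have h7 : ∀ z : X, A.indicator (fun _ => (1:ℝ≥0∞)) z * w p z
            = A.indicator (fun z' => w p z') z := fun z => by
          by_cases hz : z ∈ A <;> simp [hz]
        rw [lintegral_congr h7, lintegral_indicator hA, hwθ p A hA]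
      rw [lintegral_congr h6,
        Measure.bind_apply hA (Kernel.measurable P).aemeasurable,
        lintegral_map (P.measurable_coe hA) hc]
    rw [← e1, e2]
  have hwdf : m.withDensity f = Pμ := by
    have h := hwd u hum' Prod.fst measurable_fst (fun p A hA => hu_setint p A hA)
    rw [hf_def, h, show γ.map Prod.fst = γ.fst from rfl, hγ1, hPμ]
  have hwdg : m.withDensity g = Pν := by
    have h := hwd v hvm' Prod.snd measurable_snd (fun p A hA => hv_setint p A hA)
    rw [hg_def, h, show γ.map Prod.snd = γ.snd from rfl, hγ2, hPν]
  have hfrn : Pμ.rnDeriv m =ᵐ[m] f := by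
    rw [← hwdf]; exact Measure.rnDeriv_withDensity m hfm
  have hgrn : Pν.rnDeriv m =ᵐ[m] g := by
    rw [← hwdg]; exact Measure.rnDeriv_withDensity m hgm
  -- the two key integrals
  set J : ℝ≥0∞ := ∫⁻ z, (Pμ.rnDeriv m z) ^ q * (Pν.rnDeriv m z) ^ (1-q) ∂m with hJdef
  have hJ : J = ∫⁻ z, f z ^ q * g z ^ (1-q) ∂m := by
    refine lintegral_congr_ae ?_
    filter_upwards [hfrn, hgrn] with z h1 h2
    rw [h1, h2]
  set I : (X × X) → ℝ≥0∞ := fun p => ∫⁻ z, u p z ^ q * v p z ^ (1-q) ∂(K p) with hIdef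
  have hIeq : ∀ p : X × X, I p = ∫⁻ z, ((P p.1).rnDeriv (P p.1 + P p.2) z) ^ q *
      ((P p.2).rnDeriv (P p.1 + P p.2) z) ^ (1-q) ∂(P p.1 + P p.2) := by
    intro p
    rw [hIdef]
    simp only
    rw [← hKapp p]
    refine lintegral_congr_ae ?_
    filter_upwards [hu' p, hv' p] with z h1 h2
    rw [h1, h2]
  have hmono : ∀ p : X × X, renyiDiv q (P p.1) (P p.2)
      = erealToENNReal ((((q-1)⁻¹ : ℝ) : EReal) * ENNReal.log (I p)) := by
    intro p
    rw [renyiDiv, if_neg hq1, hIeq p]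
  have hGm : Measurable (fun x : X × (X × X) => u x.2 x.1 ^ q * v x.2 x.1 ^ (1-q)) :=
    (hum'.pow_const q).mul (hvm'.pow_const (1-q))
  have hIint : ∫⁻ p, I p ∂γ
      = ∫⁻ z, ∫⁻ p, (u p z) ^ q * (v p z) ^ (1-q) ∂(κc z) ∂m := by
    rw [← hcond _ hGm, hswap _ hGm]
  -- conclusion
  set T : ℝ≥0∞ := ∫⁻ p : X × X,
    EReal.exp (((q - 1 : ℝ) : EReal) * (ρ p.1 p.2 : EReal)) ∂γ with hTdef
  show renyiDiv q Pμ Pν ≤ erealToENNReal ((((q - 1)⁻¹ : ℝ) : EReal) * ENNReal.log T)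
  rw [renyiDiv, if_neg hq1, ← hm, ← hJdef]
  rcases lt_or_gt_of_ne hq1 with hqlt | hqgt
  · -- q < 1
    have hc : (q - 1 : ℝ) < 0 := by linarith
    have hIle1 : ∀ p : X × X, I p ≤ 1 := by
      intro p
      calc I p ≤ (∫⁻ z, u p z ∂(K p)) ^ q * (∫⁻ z, v p z ∂(K p)) ^ (1-q) :=
            holder_aux hq0 hqlt (K p) (u p) (v p)
              (hum.comp (measurable_const.prodMk measurable_id))
              (hvm.comp (measurable_const.prodMk measurable_id))
        _ = 1 := by
            rw [hu_int p, hv_int p, ENNReal.one_rpow, ENNReal.one_rpow, mul_one]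
    have hIbound : ∀ p : X × X,
        EReal.exp (((q - 1 : ℝ) : EReal) * (ρ p.1 p.2 : EReal)) ≤ I p := by
      intro p
      exact conv_lt hc (hIle1 p) ((hmono p) ▸ hone p.1 p.2)
    have hTJ : T ≤ ∫⁻ p, I p ∂γ := by
      rw [hTdef]
      exact lintegral_mono hIbound
    have hmid : ∫⁻ p, I p ∂γ ≤ J := by
      rw [hJ, hIint]
      refine lintegral_mono fun z => ?_
      exact holder_aux hq0 hqlt (κc z) _ _ (humz z) (hvmz z)
    exact final_lt (inv_neg''.mpr hc) (hTJ.trans hmid)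
  · -- q > 1
    have hc : (0:ℝ) < q - 1 := by linarith
    have hIbound : ∀ p : X × X,
        I p ≤ EReal.exp (((q - 1 : ℝ) : EReal) * (ρ p.1 p.2 : EReal)) := by
      intro p
      exact conv_gt hc ((hmono p) ▸ hone p.1 p.2)
    have hmid : J ≤ ∫⁻ p, I p ∂γ := by
      rw [hJ, hIint]
      refine lintegral_mono fun z => ?_
      exact reverse_holder_aux hqgt (κc z) _ _ (humz z) (hvmz z)
    have hIT : ∫⁻ p, I p ∂γ ≤ T := by
      rw [hTdef]
      exact lintegral_mono hIbound
    exact final_gt (inv_pos.mpr hc) (hmid.trans hIT)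

end SCR
end
end
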